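/- arXiv:1706.03218 — 6 statements merged into one kernel-verified Lean document; each statement's English description precedes it below -/
import Mathlib

section
/- For a vector x in Z^n, the norm (sum of squares of coordinates) of x/2 is congruent modulo 2 to (1/4) of the Euclidean weight of x mod 4, i.e., if x reduces mod 4 to a codeword c, then the squared norm of x/2 equals the Euclidean weight of c divided by 4, modulo 2Z. -/
open Finset

/-- Euclidean weight of a vector over `ZMod 4`: `n1 + 4*n2 + n3`. -/
def euclWt {n : ℕ} (x : Fin n → ZMod 4) : ℕ :=
  (univ.filter fun i => x i = 1).card + 4 * (univ.filter fun i => x i = 2).card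
    + (univ.filter fun i => x i = 3).card

/-- A `ZMod 4`-code is self-dual if it equals its dual under the standard inner product. -/
def IsSelfDualZ4 {n : ℕ} (C : Submodule (ZMod 4) (Fin n → ZMod 4)) : Prop :=
  ∀ x, x ∈ C ↔ ∀ y ∈ C, ∑ i, x i * y i = 0

/-- reduction mod 2 -/
def res : ZMod 4 →+* ZMod 2 := ZMod.castHom (by norm_num : (2:ℕ) ∣ 4) (ZMod 2)

def wI (b : ZMod 4) : ℤ :=
  (if b = 1 then 1 else 0) + 4 * (if b = 2 then 1 else 0) + (if b = 3 then 1 else 0)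

lemma key' (a r : ℤ) (hr : (4:ℤ) ∣ a - r) : (8:ℤ) ∣ a^2 - r^2 := by
  obtain ⟨k, hk⟩ := hr
  have ha : a = 4 * k + r := by linarith
  exact ⟨2 * k ^ 2 + k * r, by rw [ha]; ring⟩

lemma sq_wI : ∀ b : ZMod 4, (8:ℤ) ∣ ((b.val:ℤ))^2 - wI b := by decide

lemma key (a : ℤ) (b : ZMod 4) (h : (a : ZMod 4) = b) :
    (8:ℤ) ∣ a^2 - wI b := by
  have hb : ((b.val : ℤ) : ZMod 4) = b := by
    simp [ZMod.intCast_cast, ZMod.natCast_val]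
  have hr : (4:ℤ) ∣ a - (b.val : ℤ) := by
    have : ((a - (b.val : ℤ) : ℤ) : ZMod 4) = 0 := by push_cast [h, hb]; ring
    exact (ZMod.intCast_zmod_eq_zero_iff_dvd _ 4).mp this
  have h1 := key' _ _ hr
  have h2 := sq_wI b
  have : a ^ 2 - wI b = (a ^ 2 - (b.val:ℤ)^2) + (((b.val:ℤ))^2 - wI b) := by ring
  rw [this]
  exact dvd_add h1 h2

lemma euclWt_eq {n : ℕ} (c : Fin n → ZMod 4) :
    (euclWt c : ℤ) = ∑ i, wI (c i) := by
  unfold euclWt wI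
  rw [Finset.card_filter, Finset.card_filter, Finset.card_filter,
    Finset.sum_add_distrib, Finset.sum_add_distrib, ← Finset.mul_sum]
  push_cast
  ring

/-- For `x : ℤ^n`, the squared norm of `x` is congruent mod 8 to the Euclidean
weight of its reduction mod 4; hence the norm of `x/2` agrees with `wtE/4` mod 2. -/
theorem stmt1 {n : ℕ} (x : Fin n → ℤ) (c : Fin n → ZMod 4)
    (hc : ∀ i, (x i : ZMod 4) = c i) :
    (8:ℤ) ∣ (∑ i, (x i)^2) - (euclWt c : ℤ) := by
  rw [euclWt_eq, ← Finset.sum_sub_distrib]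
  exact Finset.dvd_sum fun i _ => key _ _ (hc i)
end

section
/- If C is a self-dual Z4-code of length n, then its residue code C^(1) = { c mod 2 : c in C } is a binary doubly even code, i.e., every codeword of C^(1) has Hamming weight divisible by 4. -/
open Finset

/-- The residue code of a self-dual `ZMod 4`-code is doubly even. -/
theorem stmt3 {n : ℕ} (C : Submodule (ZMod 4) (Fin n → ZMod 4))
    (hsd : IsSelfDualZ4 C) :
    ∀ c ∈ C, 4 ∣ (univ.filter fun i => res (c i) ≠ 0).card := by
  intro c hc
  have h0 : ∑ i, c i * c i = 0 := ((hsd c).mp hc) c hc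
  have hsum : (((univ.filter fun i => res (c i) ≠ 0).card : ℕ) : ZMod 4)
      = ∑ i, c i * c i := by
    rw [← Finset.sum_boole]
    refine Finset.sum_congr rfl fun i _ => ?_
    have h4 : c i = 0 ∨ c i = 1 ∨ c i = 2 ∨ c i = 3 := (by decide : ∀ a : ZMod 4, a = 0 ∨ a = 1 ∨ a = 2 ∨ a = 3) (c i)
    rcases h4 with h | h | h | h <;> rw [h] <;> decide
  rw [h0] at hsum
  exact (ZMod.natCast_eq_zero_iff _ 4).mp hsum
end

section
/- If C is a Type II Z4-code of length n (self-dual with all Euclidean weights divisible by 8), then the residue code C^(1) contains the all-ones vector. -/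
open Finset

/-- injection `ZMod 2 → ZMod 4` via multiplication by 2 -/
def iota : ZMod 2 →+ ZMod 4 where
  toFun a := 2 * (a.val : ZMod 4)
  map_zero' := by decide
  map_add' := by decide

lemma iota_mul_res (a : ZMod 2) (c : ZMod 4) : iota a * c = iota (a * res c) := by
  revert a c; decide

/-- componentwise reduction mod 2 as a semilinear map -/
def resMap (n : ℕ) : (Fin n → ZMod 4) →ₛₗ[res] (Fin n → ZMod 2) where
  toFun x i := res (x i)
  map_add' x y := by funext i; simp
  map_smul' a x := by funext i; simp

instance : RingHomSurjective res := ⟨by decide⟩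

/-- The residue code of a Type II `ZMod 4`-code contains the all-ones vector. -/
theorem stmt4 {n : ℕ} (C : Submodule (ZMod 4) (Fin n → ZMod 4))
    (hsd : IsSelfDualZ4 C) (hII : ∀ x ∈ C, 8 ∣ euclWt x) :
    ∃ c ∈ C, ∀ i, res (c i) = 1 := by
  classical
  set B : Submodule (ZMod 2) (Fin n → ZMod 2) := C.map (resMap n) with hB
  suffices h : (fun _ => (1 : ZMod 2)) ∈ B by
    obtain ⟨c, hc, hres⟩ := Submodule.mem_map.mp h
    exact ⟨c, hc, fun i => congrFun hres i⟩
  by_contra hj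
  obtain ⟨f, hfB, hfj⟩ : ∃ f : (Fin n → ZMod 2) →ₗ[ZMod 2] ZMod 2,
      (∀ v ∈ B, f v = 0) ∧ f (fun _ => 1) ≠ 0 := by
    have hq : B.mkQ (fun _ => 1) ≠ 0 := by
      rw [Submodule.mkQ_apply, Ne, Submodule.Quotient.mk_eq_zero]
      exact hj
    have := (Module.forall_dual_apply_eq_zero_iff (ZMod 2)
      (B.mkQ fun _ => 1)).not.mpr hq
    push_neg at this
    obtain ⟨g, hg⟩ := this
    refine ⟨g.comp B.mkQ, fun v hv => ?_, hg⟩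
    have : (Submodule.Quotient.mk v : _ ⧸ B) = 0 := (Submodule.Quotient.mk_eq_zero B).mpr hv
    simp only [LinearMap.comp_apply, Submodule.mkQ_apply, this, map_zero]
  set w : Fin n → ZMod 2 := fun i => f (fun j => if i = j then 1 else 0) with hw
  have hfv : ∀ v : Fin n → ZMod 2, f v = ∑ i, v i * w i := by
    intro v
    conv_lhs => rw [pi_eq_sum_univ v]
    rw [map_sum]
    exact Finset.sum_congr rfl fun i _ => by rw [map_smul, smul_eq_mul]
  -- `w` is orthogonal to B, hence its lift `ι∘w` lies in C
  have hwC : (fun i => iota (w i)) ∈ C := by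
    rw [hsd]
    intro y hy
    have h1 : ∑ i, w i * res (y i) = 0 := by
      have h2 := hfB (resMap n y) (hB ▸ Submodule.mem_map_of_mem hy)
      rw [hfv] at h2
      calc ∑ i, w i * res (y i) = ∑ i, (resMap n y) i * w i := by
            refine Finset.sum_congr rfl fun i _ => ?_
            simp [resMap, mul_comm]
        _ = 0 := h2
    calc ∑ i, iota (w i) * y i = ∑ i, iota (w i * res (y i)) :=
          Finset.sum_congr rfl fun i _ => iota_mul_res _ _
      _ = iota (∑ i, w i * res (y i)) := (map_sum iota _ _).symm
      _ = 0 := by rw [h1, map_zero]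
  -- Type II condition forces the weight of `w` to be even
  have h8 := hII _ hwC
  have h1e : (univ.filter fun i => iota (w i) = 1) = ∅ := by
    refine Finset.filter_eq_empty_iff.mpr fun i _ => ?_
    have : ∀ a : ZMod 2, ¬ iota a = 1 := by decide
    exact this _
  have h3e : (univ.filter fun i => iota (w i) = 3) = ∅ := by
    refine Finset.filter_eq_empty_iff.mpr fun i _ => ?_
    have : ∀ a : ZMod 2, ¬ iota a = 3 := by decide
    exact this _
  have h2e : (univ.filter fun i => iota (w i) = 2) = univ.filter fun i => w i = 1 := by
    refine Finset.filter_congr fun i _ => ?_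
    have : ∀ a : ZMod 2, (iota a = 2 ↔ a = 1) := by decide
    exact this _
  have hcard : 2 ∣ (univ.filter fun i => w i = 1).card := by
    have : euclWt (fun i => iota (w i)) = 4 * (univ.filter fun i => w i = 1).card := by
      rw [euclWt, h1e, h2e, h3e]; simp
    rw [this] at h8
    omega
  have hsum : ∑ i, w i = 0 := by
    have hstep : ∑ i, w i = ((univ.filter fun i => w i = 1).card : ZMod 2) := by
      have h01 : ∀ a : ZMod 2, a ≠ 0 → a = 1 := by decide
      calc ∑ i, w i = ∑ i ∈ univ.filter fun i => w i = 1, w i := by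
            refine (Finset.sum_filter_of_ne fun i _ hne => h01 _ hne).symm
        _ = ∑ i ∈ univ.filter fun i => w i = 1, 1 := by
            refine Finset.sum_congr rfl fun i hi => ?_
            exact (Finset.mem_filter.mp hi).2
        _ = _ := by rw [Finset.sum_const, nsmul_eq_mul, mul_one]
    obtain ⟨k, hk⟩ := hcard
    rw [hstep, hk]
    rw [Nat.cast_mul]
    norm_num
    exact Or.inl (by decide)
  apply hfj
  rw [hfv]
  simpa using hsum
end

section
/- If a Type II Z4-code of length n exists, then n ≡ 0 (mod 8). -/
/-!
Let `ζ` be a primitive 8th root of unity. Since `a² mod 8` depends only on `a mod 4`, the Gaussian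
`ε(x) = ζ ^ ∑ xᵢ²` is a function on `(ℤ/4)ⁿ`, and the Type II condition says that `ε = 1` on `C`.
The one-dimensional Gauss sum `∑ₐ ζ^(a²) = 2ζ` shows that the Fourier transform of `ε` is
`(2ζ)ⁿ ε⁻¹`. Summing it over `C` and using `C = C⊥` gives `|C| (2ζ)ⁿ = |C|²`, so `(2ζ)ⁿ = |C|` is a
positive integer: then `|C| = 2ⁿ` and `ζⁿ = 1`, i.e. `8 ∣ n`.
-/

open Finset

namespace Z4Code

variable {K : Type*} [CommRing K] {ζ : K}

def quadChar (ζ : K) (a : ZMod 4) : K := ζ ^ (a.val ^ 2)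

lemma sq_isPrimitiveRoot (hζ : IsPrimitiveRoot ζ 8) : IsPrimitiveRoot (ζ ^ 2) 4 :=
  hζ.pow (by norm_num) (by norm_num)

def addChar (hζ : IsPrimitiveRoot ζ 8) : AddChar (ZMod 4) K :=
  AddChar.zmodChar 4 (sq_isPrimitiveRoot hζ).pow_eq_one

lemma addChar_apply (hζ : IsPrimitiveRoot ζ 8) (a : ZMod 4) : addChar hζ a = ζ ^ (2 * a.val) :=
  (pow_mul ζ 2 a.val).symm

lemma addChar_eq_one_iff (hζ : IsPrimitiveRoot ζ 8) {a : ZMod 4} :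
    addChar hζ a = 1 ↔ a = 0 :=
  (AddChar.zmodChar_primitive_of_primitive_root 4 (sq_isPrimitiveRoot hζ)).zmod_char_eq_one_iff 4 a

lemma addChar_sum (hζ : IsPrimitiveRoot ζ 8) {ι : Type*} (s : Finset ι) (f : ι → ZMod 4) :
    addChar hζ (∑ i ∈ s, f i) = ∏ i ∈ s, addChar hζ (f i) :=
  map_prod (addChar hζ).toMonoidHom (fun i => Multiplicative.ofAdd (f i)) s

lemma quadChar_add (hζ : IsPrimitiveRoot ζ 8) (a b : ZMod 4) :
    quadChar ζ (a + b) = quadChar ζ a * quadChar ζ b * addChar hζ (a * b) := by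
  have hmod : ∀ a b : ZMod 4,
      (a + b).val ^ 2 % 8 = (a.val ^ 2 + b.val ^ 2 + 2 * (a * b).val) % 8 := by
    decide
  simp only [quadChar, addChar_apply, ← pow_add]
  rw [pow_eq_pow_mod _ hζ.pow_eq_one, hmod, ← pow_eq_pow_mod _ hζ.pow_eq_one]

lemma sum_quadChar [IsDomain K] (hζ : IsPrimitiveRoot ζ 8) : ∑ a, quadChar ζ a = 2 * ζ := by
  have h4 : ζ ^ 4 = -1 := (hζ.pow (n := 8) (by norm_num) (by norm_num)).eq_neg_one_of_two_right
  have h9 : ζ ^ 9 = ζ := by rw [pow_succ, hζ.pow_eq_one, one_mul]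
  calc ∑ a, quadChar ζ a = ζ ^ 0 + ζ ^ 1 + ζ ^ 4 + ζ ^ 9 := Fin.sum_univ_four _
    _ = 2 * ζ := by rw [h4, h9]; ring

lemma sum_quadChar_mul_addChar [IsDomain K] (hζ : IsPrimitiveRoot ζ 8) (t : ZMod 4) :
    (∑ a, quadChar ζ a * addChar hζ (a * t)) * quadChar ζ t = 2 * ζ := by
  rw [sum_mul, ← sum_quadChar hζ]
  refine Fintype.sum_equiv (Equiv.addRight t) _ _ fun a => ?_
  rw [Equiv.coe_addRight, quadChar_add hζ]
  ring

variable {ι : Type*} [Fintype ι]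

lemma sum_prod_quadChar_mul_addChar_dotProduct [IsDomain K] [DecidableEq ι]
    (hζ : IsPrimitiveRoot ζ 8) (y : ι → ZMod 4) :
    (∑ x : ι → ZMod 4, (∏ i, quadChar ζ (x i)) * addChar hζ (x ⬝ᵥ y)) * ∏ i, quadChar ζ (y i) =
      (2 * ζ) ^ Fintype.card ι := by
  have hfactor : ∑ x : ι → ZMod 4, (∏ i, quadChar ζ (x i)) * addChar hζ (x ⬝ᵥ y) =
      ∏ i, ∑ a, quadChar ζ a * addChar hζ (a * y i) := by
    rw [Fintype.prod_sum]
    refine sum_congr rfl fun x _ => ?_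
    rw [dotProduct, addChar_sum, prod_mul_distrib]
  rw [hfactor, ← prod_mul_distrib, prod_congr rfl fun i _ => sum_quadChar_mul_addChar hζ (y i),
    prod_const, card_univ]

lemma sum_addChar_dotProduct_of_selfDual [IsDomain K] (hζ : IsPrimitiveRoot ζ 8)
    {C : Submodule (ZMod 4) (ι → ZMod 4)} [Fintype C] [DecidablePred (· ∈ C)]
    (hC : ∀ x, x ∈ C ↔ ∀ y ∈ C, x ⬝ᵥ y = 0) (x : ι → ZMod 4) :
    ∑ y : C, addChar hζ (x ⬝ᵥ y) = if x ∈ C then (Fintype.card C : K) else 0 := by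
  let ψ : AddChar C K := (addChar hζ).compAddMonoidHom
    (AddMonoidHom.mk' (fun y : C => x ⬝ᵥ y) fun y z => by simp [dotProduct_add])
  have hψ : ψ = 0 ↔ x ∈ C := by
    simp [ψ, AddChar.eq_zero_iff, addChar_eq_one_iff, hC x]
  classical
  have hsum := AddChar.sum_eq_ite ψ
  simp only [hψ] at hsum
  exact hsum

lemma two_mul_pow_card_eq_card_of_selfDual [IsDomain K] [CharZero K] [DecidableEq ι]
    (hζ : IsPrimitiveRoot ζ 8) {C : Submodule (ZMod 4) (ι → ZMod 4)} [Fintype C]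
    (hC : ∀ x, x ∈ C ↔ ∀ y ∈ C, x ⬝ᵥ y = 0)
    (hq : ∀ x ∈ C, ∏ i, quadChar ζ (x i) = 1) :
    (2 * ζ) ^ Fintype.card ι = Fintype.card C := by
  classical
  refine mul_left_cancel₀ (Nat.cast_ne_zero.2 (Fintype.card_ne_zero (α := C))) ?_
  calc (Fintype.card C : K) * (2 * ζ) ^ Fintype.card ι
      = ∑ y : C, ∑ x : ι → ZMod 4, (∏ i, quadChar ζ (x i)) * addChar hζ (x ⬝ᵥ y) := by
        rw [sum_congr rfl fun y _ => ?_, sum_const, card_univ, nsmul_eq_mul]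
        simpa only [hq y y.2, mul_one] using
          sum_prod_quadChar_mul_addChar_dotProduct hζ (y : ι → ZMod 4)
    _ = ∑ x : ι → ZMod 4, (∏ i, quadChar ζ (x i)) * ∑ y : C, addChar hζ (x ⬝ᵥ y) := by
        rw [sum_comm]
        simp_rw [mul_sum]
    _ = Fintype.card C * Fintype.card C := by
        simp_rw [sum_addChar_dotProduct_of_selfDual hζ hC, mul_ite, mul_zero]
        rw [← sum_filter, sum_congr rfl fun x hx => by rw [hq x (mem_filter.1 hx).2, one_mul],
          sum_const, ← Fintype.card_subtype, nsmul_eq_mul]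

lemma prod_quadChar_eq_one (hζ : IsPrimitiveRoot ζ 8) {x : ι → ZMod 4}
    (h : 8 ∣ ∑ i, (x i).val ^ 2) : ∏ i, quadChar ζ (x i) = 1 := by
  simp only [quadChar]
  rw [prod_pow_eq_pow_sum, hζ.pow_eq_one_iff_dvd]
  exact h

lemma eight_dvd_of_two_mul_pow_eq_natCast [IsDomain K] [CharZero K] (hζ : IsPrimitiveRoot ζ 8)
    {n m : ℕ} (h : (2 * ζ) ^ n = m) : 8 ∣ n := by
  have hm : m = 2 ^ n := by
    have h8 : ((m ^ 8 : ℕ) : K) = ((2 ^ n) ^ 8 : ℕ) := by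
      rw [Nat.cast_pow, ← h, mul_pow, mul_pow, ← pow_mul ζ, mul_comm n 8, pow_mul,
        hζ.pow_eq_one, one_pow, mul_one]
      push_cast
      ring
    exact Nat.pow_left_injective (by norm_num) (Nat.cast_injective h8)
  rw [← hζ.pow_eq_one_iff_dvd]
  refine mul_left_cancel₀ (pow_ne_zero n (two_ne_zero : (2 : K) ≠ 0)) ?_
  rw [← mul_pow, h, hm, mul_one, Nat.cast_pow, Nat.cast_ofNat]

end Z4Code

lemma eight_dvd_sum_val_sq_iff {n : ℕ} (x : Fin n → ZMod 4) :
    8 ∣ ∑ i, (x i).val ^ 2 ↔ 8 ∣ euclWt x := by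
  have hcast : ((∑ i, (x i).val ^ 2 : ℕ) : ZMod 8) = euclWt x := by
    simp only [euclWt, card_filter]
    push_cast
    rw [mul_sum, ← sum_add_distrib, ← sum_add_distrib]
    refine sum_congr rfl fun i _ => ?_
    generalize x i = a
    revert a
    decide
  rw [← ZMod.natCast_eq_zero_iff, ← ZMod.natCast_eq_zero_iff, hcast]

/-- A Type II `ZMod 4`-code of length n exists only if 8 divides n. -/
theorem stmt5 {n : ℕ} (C : Submodule (ZMod 4) (Fin n → ZMod 4))
    (hsd : IsSelfDualZ4 C) (hII : ∀ x ∈ C, 8 ∣ euclWt x) :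
    n % 8 = 0 := by
  classical
  have hζ := Complex.isPrimitiveRoot_exp 8 (by norm_num)
  have hcard := Z4Code.two_mul_pow_card_eq_card_of_selfDual hζ hsd fun x hx =>
    Z4Code.prod_quadChar_eq_one hζ ((eight_dvd_sum_val_sq_iff x).2 (hII x hx))
  rw [Fintype.card_fin] at hcard
  exact Nat.mod_eq_zero_of_dvd (Z4Code.eight_dvd_of_two_mul_pow_eq_natCast hζ hcard)
end

section
/- If B is a binary self-orthogonal code containing the all-ones vector and every codeword of B has weight divisible by 4 (doubly even), and B is self-dual of length n, then n ≡ 0 (mod 8). -/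
/-!
For a binary code `C`, expanding `∏ⱼ (1 + z·(-1)^{cⱼ})` and summing over `c ∈ C` gives, by
orthogonality of characters, `|C| · ∑_{v ∈ C^⊥} z^{wt v}`. For a doubly even self-dual code `B`
of length `n`, take `z = i`: each product equals `(1 + i)^n`, because `(1 - i)^4 = (1 + i)^4`,
and each `i^{wt v}` equals `1`. Hence `(1 + i)^n = |B|` is a positive integer, which forces
`8 ∣ n`.
-/

open Finset

/-- A binary code is self-dual if it equals its dual. -/
def IsSelfDualBin {n : ℕ} (B : Submodule (ZMod 2) (Fin n → ZMod 2)) : Prop :=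
  ∀ x, x ∈ B ↔ ∀ y ∈ B, ∑ i, x i * y i = 0

open Matrix

local notation "ℤ[i]" => GaussianInt
local notation "𝐢" => (Zsqrtd.sqrtd : ℤ[i])

lemma AddChar.map_sum_eq_prod {ι A M : Type*} [AddCommMonoid A] [CommMonoid M] (ψ : AddChar A M)
    (s : Finset ι) (f : ι → A) : ψ (∑ i ∈ s, f i) = ∏ i ∈ s, ψ (f i) :=
  map_prod ψ.toMonoidHom (fun i => Multiplicative.ofAdd (f i)) s

def signChar (R : Type*) [CommRing R] : AddChar (ZMod 2) R := AddChar.zmodChar 2 neg_one_sq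

section SignChar

variable {ι R : Type*} [Fintype ι] [CommRing R]

@[simp] lemma signChar_one : signChar R 1 = -1 := by
  simp [signChar, AddChar.zmodChar_apply, ZMod.val_one]

lemma signChar_eq_one_iff [CharZero R] (a : ZMod 2) : signChar R a = 1 ↔ a = 0 := by
  rcases (by decide : ∀ a : ZMod 2, a = 0 ∨ a = 1) a with rfl | rfl <;> norm_num

lemma one_add_mul_signChar (z : R) (a : ZMod 2) :
    1 + z * signChar R a = ∑ x : ZMod 2, (if x = 0 then 1 else z) * signChar R (a * x) := by
  rw [show (univ : Finset (ZMod 2)) = {0, 1} by decide, sum_pair zero_ne_one]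
  simp

lemma prod_one_add_mul_signChar_eq_sum [DecidableEq ι] (z : R) (c : ι → ZMod 2) :
    ∏ j, (1 + z * signChar R (c j)) =
      ∑ v : ι → ZMod 2, z ^ hammingNorm v * signChar R (c ⬝ᵥ v) := by
  simp_rw [one_add_mul_signChar, Fintype.prod_sum, prod_mul_distrib, ← AddChar.map_sum_eq_prod,
    prod_ite, prod_const_one, prod_const, one_mul]
  rfl

lemma prod_one_add_mul_signChar (z : R) (c : ι → ZMod 2) :
    ∏ j, (1 + z * signChar R (c j)) =
      (1 + z) ^ (Fintype.card ι - hammingNorm c) * (1 - z) ^ hammingNorm c := by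
  have hfactor (j : ι) : 1 + z * signChar R (c j) = if c j = 0 then 1 + z else 1 - z := by
    rcases (by decide : ∀ a : ZMod 2, a = 0 ∨ a = 1) (c j) with h | h <;> simp [h, sub_eq_add_neg]
  rw [prod_congr rfl fun j _ => hfactor j, prod_ite, prod_const, prod_const]
  have hsplit := card_filter_add_card_filter_not (s := univ) (fun j => c j = 0)
  rw [card_univ] at hsplit
  rw [hammingNorm, ← hsplit]
  simp only [ne_eq, Nat.add_sub_cancel]

def dotProductSignChar (C : Submodule (ZMod 2) (ι → ZMod 2)) (v : ι → ZMod 2) : AddChar C R :=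
  (signChar R).compAddMonoidHom
    { toFun c := (c : ι → ZMod 2) ⬝ᵥ v
      map_zero' := zero_dotProduct v
      map_add' a b := add_dotProduct (a : ι → ZMod 2) b v }

open Classical in
lemma sum_signChar_dotProduct [IsDomain R] [CharZero R] (C : Submodule (ZMod 2) (ι → ZMod 2))
    [Fintype C] (v : ι → ZMod 2) :
    ∑ c : C, signChar R ((c : ι → ZMod 2) ⬝ᵥ v) =
      if ∀ c ∈ C, c ⬝ᵥ v = 0 then (Fintype.card C : R) else 0 := by
  have htriv : dotProductSignChar (R := R) C v = 0 ↔ ∀ c ∈ C, c ⬝ᵥ v = 0 := by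
    simp [AddChar.eq_zero_iff, dotProductSignChar, signChar_eq_one_iff]
  simp only [← htriv]
  exact AddChar.sum_eq_ite (dotProductSignChar C v)

open Classical in
lemma sum_prod_one_add_mul_signChar [DecidableEq ι] [IsDomain R] [CharZero R]
    (C : Submodule (ZMod 2) (ι → ZMod 2)) [Fintype C] (z : R) :
    ∑ c : C, ∏ j, (1 + z * signChar R ((c : ι → ZMod 2) j)) =
      Fintype.card C * ∑ v with ∀ c ∈ C, c ⬝ᵥ v = 0, z ^ hammingNorm v := by
  simp_rw [prod_one_add_mul_signChar_eq_sum]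
  rw [sum_comm]
  simp_rw [← mul_sum, sum_signChar_dotProduct, mul_ite, mul_zero, ← sum_filter, mul_sum, mul_comm]

end SignChar

lemma sqrtd_pow_of_four_dvd {w : ℕ} (hw : 4 ∣ w) : 𝐢 ^ w = 1 := by
  obtain ⟨k, rfl⟩ := hw
  rw [pow_mul, show 𝐢 ^ 4 = 1 by decide, one_pow]

lemma one_sub_sqrtd_pow_of_four_dvd {w : ℕ} (hw : 4 ∣ w) : (1 - 𝐢) ^ w = (1 + 𝐢) ^ w := by
  obtain ⟨k, rfl⟩ := hw
  rw [pow_mul, pow_mul, show (1 - 𝐢) ^ 4 = (1 + 𝐢) ^ 4 by decide]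

lemma prod_one_add_sqrtd_mul_signChar_of_four_dvd {ι : Type*} [Fintype ι] (c : ι → ZMod 2)
    (hc : 4 ∣ hammingNorm c) :
    ∏ j, (1 + 𝐢 * signChar ℤ[i] (c j)) = (1 + 𝐢) ^ Fintype.card ι := by
  rw [prod_one_add_mul_signChar, one_sub_sqrtd_pow_of_four_dvd hc, ← pow_add,
    Nat.sub_add_cancel hammingNorm_le_card_fintype]

/-- `(1 + i)^n = 16^(n / 8) (1 + i)^(n % 8)`, and `(1 + i)^r` with `0 < r < 8` is not a
nonnegative real. -/
lemma eight_dvd_of_one_add_sqrtd_pow_eq_natCast {n m : ℕ} (h : (1 + 𝐢) ^ n = m) : 8 ∣ n := by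
  obtain ⟨q, r, hr, rfl⟩ : ∃ q r, r < 8 ∧ n = 8 * q + r :=
    ⟨n / 8, n % 8, n.mod_lt (by norm_num), (n.div_add_mod 8).symm⟩
  rw [pow_add, pow_mul, show (1 + 𝐢) ^ 8 = ((16 : ℤ) : ℤ[i]) by decide, ← Int.cast_pow] at h
  have him : ((1 + 𝐢) ^ r).im = 0 := by
    have := congrArg Zsqrtd.im h
    rw [Zsqrtd.im_smul, Zsqrtd.im_natCast] at this
    exact (mul_eq_zero.mp this).resolve_left (by positivity)
  have hre : 0 ≤ ((1 + 𝐢) ^ r).re := by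
    have := congrArg Zsqrtd.re h
    rw [Zsqrtd.re_smul, Zsqrtd.re_natCast] at this
    exact nonneg_of_mul_nonneg_right (this ▸ m.cast_nonneg) (by positivity)
  suffices r = 0 by simp [this]
  interval_cases r <;> revert him hre <;> decide

theorem stmt11_general {n : ℕ} (B : Submodule (ZMod 2) (Fin n → ZMod 2))
    (hsd : IsSelfDualBin B)
    (hde : ∀ b ∈ B, 4 ∣ (univ.filter fun i => b i ≠ 0).card) :
    n % 8 = 0 := by
  classical
  have hdual (v : Fin n → ZMod 2) : (∀ c ∈ B, c ⬝ᵥ v = 0) ↔ v ∈ B := by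
    simp only [hsd v, dotProduct, mul_comm]
  have hcount : (Fintype.card B : ℤ[i]) * (1 + 𝐢) ^ n = Fintype.card B * Fintype.card B :=
    calc (Fintype.card B : ℤ[i]) * (1 + 𝐢) ^ n
        = ∑ c : B, ∏ j, (1 + 𝐢 * signChar ℤ[i] ((c : Fin n → ZMod 2) j)) := by
          simp [prod_one_add_sqrtd_mul_signChar_of_four_dvd _ (hde _ (Subtype.prop _))]
      _ = Fintype.card B * ∑ v with ∀ c ∈ B, c ⬝ᵥ v = 0, 𝐢 ^ hammingNorm v :=
          sum_prod_one_add_mul_signChar B 𝐢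
      _ = Fintype.card B * Fintype.card B := by
          rw [filter_congr fun v _ => hdual v, sum_congr rfl fun v hv =>
            sqrtd_pow_of_four_dvd (w := hammingNorm v) (hde v (mem_filter.mp hv).2),
            sum_const, Fintype.card_subtype, nsmul_one]
  have hcard : (Fintype.card B : ℤ[i]) ≠ 0 := Nat.cast_ne_zero.mpr Fintype.card_ne_zero
  exact Nat.mod_eq_zero_of_dvd
    (eight_dvd_of_one_add_sqrtd_pow_eq_natCast (mul_left_cancel₀ hcard hcount))

/-- A doubly even binary self-dual code containing the all-ones vector has
length divisible by 8. -/
theorem stmt11 {n : ℕ} (B : Submodule (ZMod 2) (Fin n → ZMod 2))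
    (hsd : IsSelfDualBin B) (hone : (fun _ => 1) ∈ B)
    (hde : ∀ b ∈ B, 4 ∣ (univ.filter fun i => b i ≠ 0).card) :
    n % 8 = 0 :=
  stmt11_general B hsd hde
end

section
/- Let C be a self-dual Z4-code generated by rows g_1,...,g_k such that each g_i has Euclidean weight divisible by 8. Then every codeword of C has Euclidean weight divisible by 8, i.e., C is Type II. -/
open Finset

/-- The lattice `A₄(C) = (1/2){x ∈ ℤⁿ : x mod 4 ∈ C}`, as a subset of `ℝⁿ`. -/
def A4 {n : ℕ} (C : Submodule (ZMod 4) (Fin n → ZMod 4)) : Set (Fin n → ℝ) :=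
  {y | ∃ x : Fin n → ℤ, (∀ i, y i = (x i : ℝ) / 2) ∧ (fun i => (x i : ZMod 4)) ∈ C}

/-- The Euclidean weight mod 8 equals the sum of squares of the coordinate values mod 8. -/
lemma euclWt_cast {n : ℕ} (x : Fin n → ZMod 4) :
    (euclWt x : ZMod 8) = ∑ i, ((x i).val : ZMod 8)^2 := by
  have h : ∀ a : ZMod 4,
      ((if a = 1 then (1:ZMod 8) else 0) + 4 * (if a = 2 then 1 else 0)
        + (if a = 3 then 1 else 0)) = (a.val : ZMod 8)^2 := by decide
  unfold euclWt
  rw [Finset.card_filter, Finset.card_filter, Finset.card_filter]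
  push_cast [apply_ite (Nat.cast : ℕ → ZMod 8)]
  rw [Finset.mul_sum, ← Finset.sum_add_distrib, ← Finset.sum_add_distrib]
  exact Finset.sum_congr rfl fun i _ => h (x i)

/-- The additive map `ZMod 4 →+ ZMod 8`, `a ↦ 2 * a.val`. -/
def phi : ZMod 4 →+ ZMod 8 where
  toFun a := 2 * (a.val : ZMod 8)
  map_zero' := by decide
  map_add' := by decide

/-- If a self-dual `ZMod 4`-code is generated by vectors of Euclidean weight
divisible by 8, then every codeword has Euclidean weight divisible by 8. -/
theorem stmt19 {n k : ℕ} (C : Submodule (ZMod 4) (Fin n → ZMod 4))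
    (hsd : IsSelfDualZ4 C) (g : Fin k → (Fin n → ZMod 4))
    (hgen : C = Submodule.span (ZMod 4) (Set.range g))
    (hg : ∀ i, 8 ∣ euclWt (g i)) :
    ∀ x ∈ C, 8 ∣ euclWt x := by
  have key : ∀ x ∈ C, (euclWt x : ZMod 8) = 0 := by
    intro x hx
    rw [hgen] at hx
    induction hx using Submodule.span_induction with
    | mem z hz =>
      obtain ⟨i, rfl⟩ := hz
      rw [(ZMod.natCast_eq_zero_iff _ _).2 (hg i)]
    | zero => simp [euclWt_cast]
    | add x y hxs hys ihx ihy =>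
      have hxC : x ∈ C := hgen ▸ hxs
      have hyC : y ∈ C := hgen ▸ hys
      have horth : ∑ i, x i * y i = 0 := (hsd x).1 hxC y hyC
      have hφ : (2 : ZMod 8) * ∑ i, ((x i).val : ZMod 8) * ((y i).val : ZMod 8) = 0 := by
        have := map_sum phi (fun i => x i * y i) univ
        rw [horth, map_zero] at this
        have h2 : ∀ a b : ZMod 4, phi (a * b) = 2 * ((a.val : ZMod 8) * (b.val : ZMod 8)) := by
          decide
        rw [Finset.mul_sum]
        simp_rw [← h2]
        exact this.symm
      have hsq : ∀ a b : ZMod 4, (((a + b).val : ZMod 8))^2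
          = ((a.val : ZMod 8) + (b.val : ZMod 8))^2 := by decide
      rw [euclWt_cast]
      have : ∀ i, (((x + y) i).val : ZMod 8)^2
          = ((x i).val : ZMod 8)^2 + ((y i).val : ZMod 8)^2
            + 2 * (((x i).val : ZMod 8) * ((y i).val : ZMod 8)) := by
        intro i
        have := hsq (x i) (y i)
        simp only [Pi.add_apply]
        rw [this]; ring
      simp_rw [this]
      rw [Finset.sum_add_distrib, Finset.sum_add_distrib, ← Finset.mul_sum,
        ← euclWt_cast, ← euclWt_cast, ihx, ihy, hφ]
      ring
    | smul c x hxs ihx =>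
      have hsm : ∀ c a : ZMod 4, (((c * a).val : ZMod 8))^2
          = (c.val : ZMod 8)^2 * ((a.val : ZMod 8))^2 := by decide
      rw [euclWt_cast]
      have : ∀ i, (((c • x) i).val : ZMod 8)^2 = (c.val : ZMod 8)^2 * ((x i).val : ZMod 8)^2 := by
        intro i; simpa using hsm c (x i)
      simp_rw [this]
      rw [← Finset.mul_sum, ← euclWt_cast, ihx, mul_zero]
  intro x hx
  exact (ZMod.natCast_eq_zero_iff _ _).1 (key x hx)
end
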